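/- Every nontrivial de Finetti algebra (one in which 0 ≠ 1) is an LP algebra: the set F = {a : ½ ⊑ a} is an inconsistent proper filter, i.e. F is a proper subset of the carrier, F is upward closed under the lattice order ⊑, F is closed under ⊓, and F contains both c and −c for some element c (namely c = ½). -/
import Mathlib


/-- A de Finetti algebra: a bounded distributive lattice with an antitone involution
satisfying the De Morgan laws and the Kleene condition, a relative
pseudocomplementation `rpc` with (a⇀0)⊔(−a⇀a)=1 (Ł3 algebra), a distinguished
element ½ with −½ = ½, and the de Finetti conditional a ⊃ b := (½ ⊓ −a) ⊔ (a ⊓ b).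
The induced order is a ⊑ b iff a ⊓ b = a. -/
structure DFAlg (α : Type*) where
  inf : α → α → α
  sup : α → α → α
  compl : α → α
  rpc : α → α → α
  cond : α → α → α
  bot : α
  top : α
  half : α
  inf_comm : ∀ a b, inf a b = inf b a
  sup_comm : ∀ a b, sup a b = sup b a
  inf_assoc : ∀ a b c, inf a (inf b c) = inf (inf a b) c
  sup_assoc : ∀ a b c, sup a (sup b c) = sup (sup a b) c
  absorb_sup : ∀ a b, sup a (inf b a) = a
  absorb_inf : ∀ a b, inf a (sup b a) = a
  sup_bot : ∀ a, sup a bot = a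
  inf_top : ∀ a, inf a top = a
  inf_distrib : ∀ a b c, inf a (sup b c) = sup (inf a b) (inf a c)
  sup_distrib : ∀ a b c, sup a (inf b c) = inf (sup a b) (sup a c)
  compl_antitone : ∀ a b, inf a b = a → inf (compl b) (compl a) = compl b
  compl_invol : ∀ a, compl (compl a) = a
  deMorgan_inf : ∀ a b, compl (inf a b) = sup (compl a) (compl b)
  deMorgan_sup : ∀ a b, compl (sup a b) = inf (compl a) (compl b)
  kleene : ∀ a b, inf (inf a (compl a)) (sup b (compl b)) = inf a (compl a)
  rpc_adj : ∀ a b c, (inf (inf a c) b = inf a c) ↔ (inf c (rpc a b) = c)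
  l3 : ∀ a, sup (rpc a bot) (rpc (compl a) a) = top
  compl_half : compl half = half
  cond_def : ∀ a b, cond a b = sup (inf half (compl a)) (inf a b)

/-- The lattice order induced by a de Finetti algebra: a ⊑ b iff a ⊓ b = a. -/
def DFAlg.le {α : Type*} (D : DFAlg α) (a b : α) : Prop := D.inf a b = a

/-- Every nontrivial de Finetti algebra (0 ≠ 1) is an LP algebra: the set
F = {a : ½ ⊑ a} is an inconsistent proper filter: F is a proper subset of the
carrier, upward closed under ⊑, closed under ⊓, and contains both c and −c for
some element c, namely c = ½. -/
theorem deFinetti_is_LP {α : Type*} (D : DFAlg α) (hnt : D.bot ≠ D.top) :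
    {a : α | D.le D.half a} ⊂ Set.univ ∧
    (∀ a b, a ∈ {a : α | D.le D.half a} → D.le a b → b ∈ {a : α | D.le D.half a}) ∧
    (∀ a b, a ∈ {a : α | D.le D.half a} → b ∈ {a : α | D.le D.half a} →
      D.inf a b ∈ {a : α | D.le D.half a}) ∧
    (D.half ∈ {a : α | D.le D.half a} ∧ D.compl D.half ∈ {a : α | D.le D.half a}) := by
  have inf_idem : ∀ a, D.inf a a = a := by
    intro a
    have h := D.absorb_inf a D.bot
    rwa [D.sup_comm, D.sup_bot] at h
  have inf_bot : ∀ a, D.inf D.bot a = D.bot := by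
    intro a
    have h := D.absorb_inf D.bot a
    rwa [D.sup_bot] at h
  have compl_bot : D.compl D.bot = D.top := by
    have h := D.compl_antitone D.bot (D.compl D.top) (inf_bot _)
    rw [D.compl_invol] at h
    have h2 : D.inf D.top (D.compl D.bot) = D.compl D.bot := by
      rw [D.inf_comm, D.inf_top]
    rw [h2] at h
    exact h
  have half_ne_bot : D.half ≠ D.bot := by
    intro h
    apply hnt
    rw [← compl_bot, ← h, D.compl_half, h]
  refine ⟨?_, ?_, ?_, ?_, ?_⟩
  · rw [Set.ssubset_univ_iff]
    intro h
    have : D.bot ∈ {a : α | D.le D.half a} := h ▸ Set.mem_univ _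
    have hb : D.inf D.half D.bot = D.half := this
    rw [D.inf_comm, inf_bot] at hb
    exact half_ne_bot hb.symm
  · intro a b ha hab
    have ha' : D.inf D.half a = D.half := ha
    have : D.inf D.half b = D.half := by
      calc D.inf D.half b = D.inf (D.inf D.half a) b := by rw [ha']
        _ = D.inf D.half (D.inf a b) := (D.inf_assoc _ _ _).symm
        _ = D.inf D.half a := by rw [hab]
        _ = D.half := ha'
    exact this
  · intro a b ha hb
    have ha' : D.inf D.half a = D.half := ha
    have hb' : D.inf D.half b = D.half := hb
    show D.inf D.half (D.inf a b) = D.half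
    rw [D.inf_assoc, ha', hb']
  · exact inf_idem D.half
  · show D.inf D.half (D.compl D.half) = D.half
    rw [D.compl_half]; exact inf_idem D.half
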